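/- arXiv:1601.05839 — 3 statements merged into one kernel-verified Lean document; each statement's English description precedes it below -/
import Mathlib

section
/- Let α ∈ (0,1) and B, R_0, λ_S, N_m, N_f > 0. The function S_0(B_S) = N_m·((B − B_S)·R_0/N_m)^{1-α} + N_f·(λ_S·B_S·R_0/N_f)^{1-α} on [0, B] (the separate-service revenue with no unlicensed spectrum) has a unique maximizer, given explicitly by B̃_S = N_f·B/(N_f + N_m·λ_S^{1 − 1/α}); in particular 0 < B̃_S < B. -/
/-!
Both summands of `S_0` are concave powers `t ↦ t ^ (1 - α)` of affine functions of `B_S`, the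
second one strictly concave, so a stationary point of `S_0` in `(0, B)` is its unique maximizer:
the tangent-line bound for `t ↦ t ^ (1 - α)` at the stationary point dominates `S_0` everywhere
else. Stationarity says that the macro rate is `λ_S ^ (-1/α)` times the small-cell rate, and
solving for `B_S` gives `B̃_S`.
-/

open Real Set

section TangentLine

variable {p s t : ℝ}

lemma rpow_lt_add_mul_sub (hp0 : 0 < p) (hp1 : p < 1) (hs : 0 < s) (ht : 0 ≤ t)
    (hts : t ≠ s) :
    t ^ p < s ^ p + p * s ^ (p - 1) * (t - s) := by
  have hu : -1 ≤ t / s - 1 := by linarith [div_nonneg ht hs.le]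
  have hu' : t / s - 1 ≠ 0 := by
    rwa [sub_ne_zero, Ne, div_eq_one_iff_eq hs.ne']
  have bernoulli := rpow_one_add_lt_one_add_mul_self hu hu' hp0 hp1
  rw [add_sub_cancel, div_rpow ht hs.le, div_lt_iff₀ (rpow_pos_of_pos hs p)] at bernoulli
  calc t ^ p < (1 + p * (t / s - 1)) * s ^ p := bernoulli
    _ = s ^ p + p * s ^ (p - 1) * (t - s) := by
      rw [rpow_sub_one hs.ne']
      field_simp

lemma rpow_le_add_mul_sub (hp0 : 0 < p) (hp1 : p < 1) (hs : 0 < s) (ht : 0 ≤ t) :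
    t ^ p ≤ s ^ p + p * s ^ (p - 1) * (t - s) := by
  rcases eq_or_ne t s with rfl | hts
  · simp
  · exact (rpow_lt_add_mul_sub hp0 hp1 hs ht hts).le

end TangentLine

lemma mul_rpow_add_mul_rpow_lt_of_stationary {p a c s₁ s₂ t₁ t₂ : ℝ} (hp0 : 0 < p)
    (hp1 : p < 1) (ha : 0 ≤ a) (hc : 0 < c) (hs₁ : 0 < s₁) (hs₂ : 0 < s₂)
    (ht₁ : 0 ≤ t₁) (ht₂ : 0 ≤ t₂) (hts : t₂ ≠ s₂)
    (hstat : a * s₁ ^ (p - 1) * (t₁ - s₁) + c * s₂ ^ (p - 1) * (t₂ - s₂) = 0) :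
    a * t₁ ^ p + c * t₂ ^ p < a * s₁ ^ p + c * s₂ ^ p := by
  have h₁ := mul_le_mul_of_nonneg_left (rpow_le_add_mul_sub hp0 hp1 hs₁ ht₁) ha
  have h₂ := mul_lt_mul_of_pos_left (rpow_lt_add_mul_sub hp0 hp1 hs₂ ht₂ hts) hc
  linear_combination h₁ + h₂ + p * hstat

lemma isMaxOn_and_unique_of_forall_lt {α β : Type*} [Preorder β] {f : α → β} {s : Set α}
    {b : α} (hb : b ∈ s) (hlt : ∀ x ∈ s, x ≠ b → f x < f b) :
    IsMaxOn f s b ∧ ∀ x ∈ s, IsMaxOn f s x → x = b := by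
  refine ⟨fun x hx => ?_, fun x hx hmax => ?_⟩
  · rcases eq_or_ne x b with rfl | hxb
    · exact le_rfl
    · exact (hlt x hx hxb).le
  · by_contra hxb
    exact (hlt x hx hxb).not_ge (hmax hb)

namespace SeparateService

variable {α B R_0 lamS N_m N_f : ℝ}

noncomputable def revenue (α B R_0 lamS N_m N_f B_S : ℝ) : ℝ :=
  N_m * ((B - B_S) * R_0 / N_m) ^ (1 - α) + N_f * (lamS * B_S * R_0 / N_f) ^ (1 - α)

noncomputable def optimalSmallCellBand (α B lamS N_m N_f : ℝ) : ℝ :=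
  N_f * B / (N_f + N_m * lamS ^ (1 - 1 / α))

lemma optimalSmallCellBand_pos (hB : 0 < B) (hlamS : 0 < lamS) (hNm : 0 < N_m)
    (hNf : 0 < N_f) : 0 < optimalSmallCellBand α B lamS N_m N_f := by
  unfold optimalSmallCellBand
  positivity

lemma optimalSmallCellBand_lt (hB : 0 < B) (hlamS : 0 < lamS) (hNm : 0 < N_m)
    (hNf : 0 < N_f) : optimalSmallCellBand α B lamS N_m N_f < B := by
  have hL : 0 < N_m * lamS ^ (1 - 1 / α) := by positivity
  rw [optimalSmallCellBand, div_lt_iff₀ (by positivity)]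
  nlinarith

lemma sub_optimalSmallCellBand (hlamS : 0 < lamS) (hNm : 0 < N_m) (hNf : 0 < N_f) :
    B - optimalSmallCellBand α B lamS N_m N_f
      = N_m * lamS ^ (1 - 1 / α) * B / (N_f + N_m * lamS ^ (1 - 1 / α)) := by
  have : 0 < N_f + N_m * lamS ^ (1 - 1 / α) := by positivity
  rw [optimalSmallCellBand]
  field_simp
  ring

/-- The common factor `(1 - α) R_0` of both marginal revenues has been cancelled. -/
lemma optimalSmallCellBand_firstOrderCondition (hα0 : 0 < α) (hB : 0 < B) (hR0 : 0 < R_0)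
    (hlamS : 0 < lamS) (hNm : 0 < N_m) (hNf : 0 < N_f) :
    ((B - optimalSmallCellBand α B lamS N_m N_f) * R_0 / N_m) ^ (-α)
      = lamS * (lamS * optimalSmallCellBand α B lamS N_m N_f * R_0 / N_f) ^ (-α) := by
  set b := optimalSmallCellBand α B lamS N_m N_f
  have hrates : (B - b) * R_0 / N_m = lamS ^ (-1 / α) * (lamS * b * R_0 / N_f) := by
    have hsplit : lamS ^ (1 - 1 / α) = lamS ^ (-1 / α) * lamS := by
      rw [← rpow_add_one hlamS.ne']
      ring_nf
    rw [sub_optimalSmallCellBand hlamS hNm hNf, hsplit]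
    simp only [b, optimalSmallCellBand, hsplit]
    field_simp
  have hb : 0 < b := optimalSmallCellBand_pos hB hlamS hNm hNf
  rw [hrates, mul_rpow (by positivity) (by positivity), ← rpow_mul hlamS.le,
    show -1 / α * -α = 1 by field_simp, rpow_one]

lemma revenue_lt_revenue_optimal (hα0 : 0 < α) (hα1 : α < 1) (hB : 0 < B) (hR0 : 0 < R_0)
    (hlamS : 0 < lamS) (hNm : 0 < N_m) (hNf : 0 < N_f) {x : ℝ}
    (hx : x ∈ Icc 0 B) (hxb : x ≠ optimalSmallCellBand α B lamS N_m N_f) :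
    revenue α B R_0 lamS N_m N_f x
      < revenue α B R_0 lamS N_m N_f (optimalSmallCellBand α B lamS N_m N_f) := by
  have hb := optimalSmallCellBand_pos (α := α) hB hlamS hNm hNf
  have hbB := optimalSmallCellBand_lt (α := α) hB hlamS hNm hNf
  have hfoc := optimalSmallCellBand_firstOrderCondition hα0 hB hR0 hlamS hNm hNf
  set b := optimalSmallCellBand α B lamS N_m N_f
  have hBb : 0 < B - b := by linarith
  have hBx : 0 ≤ B - x := by linarith [hx.2]
  apply mul_rpow_add_mul_rpow_lt_of_stationary (by linarith) (by linarith) hNm.le hNf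
    (by positivity) (by positivity) (by positivity) (by have := hx.1; positivity)
  · contrapose! hxb
    field_simp at hxb
    exact hxb
  · rw [show 1 - α - 1 = -α by ring, hfoc]
    field_simp
    ring

end SeparateService

open SeparateService in
/-- with no unlicensed spectrum, the separate-service revenue
`S_0(B_S) = N_m·((B − B_S)·R_0/N_m)^(1-α) + N_f·(λ_S·B_S·R_0/N_f)^(1-α)` on `[0, B]`
has the unique maximizer `B̃_S = N_f·B/(N_f + N_m·λ_S^(1 − 1/α))`, which lies in `(0, B)`. -/
theorem stmt7 (α B R_0 lamS N_m N_f : ℝ) (hα0 : 0 < α) (hα1 : α < 1)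
    (hB : 0 < B) (hR0 : 0 < R_0) (hlamS : 0 < lamS) (hNm : 0 < N_m) (hNf : 0 < N_f) :
    IsMaxOn (fun B_S : ℝ =>
        N_m * ((B - B_S) * R_0 / N_m) ^ (1 - α)
          + N_f * (lamS * B_S * R_0 / N_f) ^ (1 - α)) (Icc 0 B)
      (N_f * B / (N_f + N_m * lamS ^ (1 - 1 / α))) ∧
    (∀ x ∈ Icc (0 : ℝ) B,
      IsMaxOn (fun B_S : ℝ =>
        N_m * ((B - B_S) * R_0 / N_m) ^ (1 - α)
          + N_f * (lamS * B_S * R_0 / N_f) ^ (1 - α)) (Icc 0 B) x →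
      x = N_f * B / (N_f + N_m * lamS ^ (1 - 1 / α))) ∧
    0 < N_f * B / (N_f + N_m * lamS ^ (1 - 1 / α)) ∧
    N_f * B / (N_f + N_m * lamS ^ (1 - 1 / α)) < B := by
  have hpos := optimalSmallCellBand_pos (α := α) hB hlamS hNm hNf
  have hlt := optimalSmallCellBand_lt (α := α) hB hlamS hNm hNf
  obtain ⟨hmax, hunique⟩ := isMaxOn_and_unique_of_forall_lt
    (f := revenue α B R_0 lamS N_m N_f) (s := Icc 0 B) ⟨hpos.le, hlt.le⟩
    fun x hx => revenue_lt_revenue_optimal hα0 hα1 hB hR0 hlamS hNm hNf hx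
  exact ⟨hmax, hunique, hpos, hlt⟩
end

section
/- Let α ∈ (0,1), κ = α^{1/(1-α)}, and let B, R_0, λ_S, N_m, N_f > 0. For C_U ≥ 0 let S(B_S; C_U) = N_m·((B−B_S)R_0/N_m)^{1-α} + N_f·R_S^{1-α} − (C_U/κ)·R_S^{-α} with R_S = (κλ_S B_S R_0 + C_U)/(κN_f), let B_S^{rev}(C_U) be its unique maximizer on [0,B], and let B̃_S = N_f B/(N_f + N_m λ_S^{1−1/α}) be the maximizer for C_U = 0. Set C_U^{th} = β*·κ·λ_S·B̃_S·R_0, where β* is the unique positive root of (1−α)(1+β)^{1+α} − β = 1−α. Then: (i) if 0 < C_U < C_U^{th}, then B_S^{rev}(C_U) > B̃_S; (ii) if C_U > C_U^{th}, then B_S^{rev}(C_U) < B̃_S. -/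
/-!
The revenue `S` has a decreasing derivative, so its maximiser lies to the right of `B̃_S`
when `S'(B̃_S) > 0` and to the left when `S'(B̃_S) < 0` (mean value theorem).
Write `C_U = β κ λ_S B̃_S R_0` and `r₀ = λ_S B̃_S R_0 / N_f`. The choice of `B̃_S` makes the
macro rate at `B̃_S` equal to `λ_S^(-1/α) r₀`, while the small-cell rate there is `(1 + β) r₀`;
hence `S'(B̃_S)` is a positive multiple of `(1 - α) - g(β)` with
`g(β) = (1 - α)(1 + β)^(1 + α) - β`. As `g` is strictly convex with `g(0) = g(β*) = 1 - α`,
it lies below `1 - α` on `(0, β*)` and above it beyond `β*`.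
-/

open Real Set

theorem StrictConvexOn.const_mul {E : Type*} [AddCommMonoid E] [Module ℝ E] {s : Set E}
    {f : E → ℝ} {c : ℝ} (hf : StrictConvexOn ℝ s f) (hc : 0 < c) :
    StrictConvexOn ℝ s fun x => c * f x :=
  ⟨hf.1, fun x hx y hy hxy a b ha hb hab => by
    simpa only [smul_eq_mul, mul_add, mul_left_comm c] using
      mul_lt_mul_of_pos_left (hf.2 hx hy hxy ha hb hab) hc⟩

theorem StrictConvexOn.lt_of_mem_Ioo_of_eq {s : Set ℝ} {f : ℝ → ℝ} {x y z : ℝ}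
    (hf : StrictConvexOn ℝ s f) (hx : x ∈ s) (hy : y ∈ s) (hfxy : f x = f y)
    (hz : z ∈ Ioo x y) : f z < f y := by
  have := hf.lt_on_openSegment hx hy (hz.1.trans hz.2).ne
    (by rwa [openSegment_eq_Ioo (hz.1.trans hz.2)])
  rwa [hfxy, max_self] at this

theorem StrictConvexOn.lt_of_eq_of_lt {s : Set ℝ} {f : ℝ → ℝ} {x y z : ℝ}
    (hf : StrictConvexOn ℝ s f) (hx : x ∈ s) (hz : z ∈ s) (hfxy : f x = f y)
    (hxy : x < y) (hyz : y < z) : f y < f z := by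
  have := hf.lt_on_openSegment hx hz (hxy.trans hyz).ne
    (by rw [openSegment_eq_Ioo (hxy.trans hyz)]; exact ⟨hxy, hyz⟩)
  rw [hfxy] at this
  exact (lt_max_iff.mp this).resolve_left (lt_irrefl _)

noncomputable def thresholdGap (α β : ℝ) : ℝ := (1 - α) * (1 + β) ^ (1 + α) - β

theorem strictConvexOn_thresholdGap {α : ℝ} (hα0 : 0 < α) (hα1 : α < 1) :
    StrictConvexOn ℝ (Ici 0) (thresholdGap α) := by
  have hrpow : StrictConvexOn ℝ (Ici 0) fun β : ℝ => (1 + β) ^ (1 + α) :=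
    ((strictConvexOn_rpow (by linarith)).translate_right 1).subset
      (fun z (hz : 0 ≤ z) => show (0:ℝ) ≤ 1 + z by linarith) (convex_Ici 0)
  exact (hrpow.const_mul (by linarith)).sub_concaveOn (concaveOn_id (convex_Ici 0))

theorem thresholdGap_lt_of_mem_Ioo {α β βs : ℝ} (hα0 : 0 < α) (hα1 : α < 1)
    (hroot : thresholdGap α βs = 1 - α) (hβ : β ∈ Ioo 0 βs) : thresholdGap α β < 1 - α := by
  have h0 : thresholdGap α 0 = thresholdGap α βs := by rw [hroot]; simp [thresholdGap]
  simpa only [hroot] using (strictConvexOn_thresholdGap hα0 hα1).lt_of_mem_Ioo_of_eq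
    (mem_Ici.2 le_rfl) (mem_Ici.2 (hβ.1.trans hβ.2).le) h0 hβ

theorem lt_thresholdGap_of_lt {α β βs : ℝ} (hα0 : 0 < α) (hα1 : α < 1) (hβs : 0 < βs)
    (hroot : thresholdGap α βs = 1 - α) (hβ : βs < β) : 1 - α < thresholdGap α β := by
  have h0 : thresholdGap α 0 = thresholdGap α βs := by rw [hroot]; simp [thresholdGap]
  simpa only [hroot] using (strictConvexOn_thresholdGap hα0 hα1).lt_of_eq_of_lt
    (mem_Ici.2 le_rfl) (mem_Ici.2 (hβs.trans hβ).le) h0 hβs hβ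

theorem IsMaxOn.lt_of_hasDerivAt_pos {f f' : ℝ → ℝ} {a b c m : ℝ}
    (hf : ContinuousOn f (Icc a b)) (hf' : ∀ x ∈ Ioo a b, HasDerivAt f (f' x) x)
    (hanti : AntitoneOn f' (Ioo a b)) (hmax : IsMaxOn f (Icc a b) m) (hm : m ∈ Icc a b)
    (hc : c ∈ Ioo a b) (hpos : 0 < f' c) : c < m := by
  refine lt_of_not_ge fun hmc => hpos.not_ge ?_
  rcases hmc.eq_or_lt with rfl | hmc
  · exact ((hmax.isLocalMax (Icc_mem_nhds hc.1 hc.2)).hasDerivAt_eq_zero (hf' m hc)).le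
  obtain ⟨ξ, hξ, hslope⟩ := exists_hasDerivAt_eq_slope f f' hmc
    (hf.mono (Icc_subset_Icc hm.1 hc.2.le))
    fun x hx => hf' x ⟨hm.1.trans_lt hx.1, hx.2.trans hc.2⟩
  calc f' c ≤ f' ξ := hanti ⟨hm.1.trans_lt hξ.1, hξ.2.trans hc.2⟩ hc hξ.2.le
    _ = (f c - f m) / (c - m) := hslope
    _ ≤ 0 := div_nonpos_of_nonpos_of_nonneg (sub_nonpos.2 (hmax ⟨hc.1.le, hc.2.le⟩))
        (sub_nonneg.2 hmc.le)

theorem IsMaxOn.lt_of_hasDerivAt_neg {f f' : ℝ → ℝ} {a b c m : ℝ}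
    (hf : ContinuousOn f (Icc a b)) (hf' : ∀ x ∈ Ioo a b, HasDerivAt f (f' x) x)
    (hanti : AntitoneOn f' (Ioo a b)) (hmax : IsMaxOn f (Icc a b) m) (hm : m ∈ Icc a b)
    (hc : c ∈ Ioo a b) (hneg : f' c < 0) : m < c := by
  refine lt_of_not_ge fun hcm => hneg.not_ge ?_
  rcases hcm.eq_or_lt with rfl | hcm
  · exact ((hmax.isLocalMax (Icc_mem_nhds hc.1 hc.2)).hasDerivAt_eq_zero (hf' c hc)).ge
  obtain ⟨ξ, hξ, hslope⟩ := exists_hasDerivAt_eq_slope f f' hcm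
    (hf.mono (Icc_subset_Icc hc.1.le hm.2))
    fun x hx => hf' x ⟨hc.1.trans hx.1, hx.2.trans_le hm.2⟩
  calc (0:ℝ) ≤ (f m - f c) / (m - c) := div_nonneg (sub_nonneg.2 (hmax ⟨hc.1.le, hc.2.le⟩))
        (sub_nonneg.2 hcm.le)
    _ = f' ξ := hslope.symm
    _ ≤ f' c := hanti hc ⟨hc.1.trans hξ.1, hξ.2.trans_le hm.2⟩ hξ.1.le

section Revenue

variable (α κ B R_0 lamS N_m N_f C_U : ℝ)

noncomputable def macroRate (b : ℝ) : ℝ := (B - b) * R_0 / N_m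

noncomputable def smallCellRate (b : ℝ) : ℝ := (κ * lamS * b * R_0 + C_U) / (κ * N_f)

noncomputable def revenue (b : ℝ) : ℝ :=
  N_m * macroRate B R_0 N_m b ^ (1 - α) + N_f * smallCellRate κ R_0 lamS N_f C_U b ^ (1 - α)
    - (C_U / κ) * smallCellRate κ R_0 lamS N_f C_U b ^ (-α)

noncomputable def revenueDeriv (b : ℝ) : ℝ :=
  -((1 - α) * R_0 * macroRate B R_0 N_m b ^ (-α))
    + (1 - α) * lamS * R_0 * smallCellRate κ R_0 lamS N_f C_U b ^ (-α)
    + α * lamS * R_0 * (C_U / (κ * N_f)) * smallCellRate κ R_0 lamS N_f C_U b ^ (-α - 1)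

noncomputable def tildeBS : ℝ := N_f * B / (N_f + N_m * lamS ^ (1 - 1 / α))

variable {α κ B R_0 lamS N_m N_f C_U}

theorem hasDerivAt_revenue {b : ℝ} (hκ : κ ≠ 0) (hNm : N_m ≠ 0) (hNf : N_f ≠ 0)
    (hu : 0 < macroRate B R_0 N_m b) (hr : 0 < smallCellRate κ R_0 lamS N_f C_U b) :
    HasDerivAt (revenue α κ B R_0 lamS N_m N_f C_U)
      (revenueDeriv α κ B R_0 lamS N_m N_f C_U b) b := by
  have hu' : HasDerivAt (macroRate B R_0 N_m) (-R_0 / N_m) b :=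
    ((((hasDerivAt_id b).const_sub B).mul_const R_0).div_const N_m).congr_deriv (by ring)
  have hr' : HasDerivAt (smallCellRate κ R_0 lamS N_f C_U) (lamS * R_0 / N_f) b :=
    (((((hasDerivAt_id b).const_mul (κ * lamS)).mul_const R_0).add_const C_U).div_const
      (κ * N_f)).congr_deriv (by field_simp)
  refine ((((hu'.rpow_const (p := 1 - α) (Or.inl hu.ne')).const_mul N_m).add
    ((hr'.rpow_const (p := 1 - α) (Or.inl hr.ne')).const_mul N_f)).sub
    ((hr'.rpow_const (p := -α) (Or.inl hr.ne')).const_mul (C_U / κ))).congr_deriv ?_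
  unfold revenueDeriv
  rw [show 1 - α - 1 = -α by ring]
  field_simp
  ring

theorem continuousOn_revenue (hα1 : α < 1) (hκ : 0 < κ) (hR0 : 0 < R_0) (hlamS : 0 < lamS)
    (hNf : 0 < N_f) (hCU : 0 < C_U) :
    ContinuousOn (revenue α κ B R_0 lamS N_m N_f C_U) (Icc 0 B) := by
  have hr : ∀ x ∈ Icc (0:ℝ) B, smallCellRate κ R_0 lamS N_f C_U x ≠ 0 := fun x hx => by
    have := hx.1
    unfold smallCellRate
    positivity
  have hu : Continuous (macroRate B R_0 N_m) := by unfold macroRate; fun_prop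
  have hr' : Continuous (smallCellRate κ R_0 lamS N_f C_U) := by unfold smallCellRate; fun_prop
  exact ((continuousOn_const.mul (hu.continuousOn.rpow_const fun _ _ => Or.inr (by linarith))).add
      (continuousOn_const.mul (hr'.continuousOn.rpow_const fun x hx => Or.inl (hr x hx)))).sub
    (continuousOn_const.mul (hr'.continuousOn.rpow_const fun x hx => Or.inl (hr x hx)))

theorem antitoneOn_revenueDeriv (hα0 : 0 < α) (hα1 : α < 1) (hκ : 0 < κ) (hR0 : 0 < R_0)
    (hlamS : 0 < lamS) (hNm : 0 < N_m) (hNf : 0 < N_f) (hCU : 0 ≤ C_U) :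
    AntitoneOn (revenueDeriv α κ B R_0 lamS N_m N_f C_U) (Ioo 0 B) := by
  intro x hx y hy hxy
  have hu : macroRate B R_0 N_m y ≤ macroRate B R_0 N_m x := by unfold macroRate; gcongr
  have hr : smallCellRate κ R_0 lamS N_f C_U x ≤ smallCellRate κ R_0 lamS N_f C_U y := by
    unfold smallCellRate; gcongr
  have huy : 0 < macroRate B R_0 N_m y := by
    have := sub_pos.2 hy.2; unfold macroRate; positivity
  have hrx : 0 < smallCellRate κ R_0 lamS N_f C_U x := by
    have := hx.1; unfold smallCellRate; positivity
  have h1α : 0 ≤ 1 - α := by linarith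
  unfold revenueDeriv
  gcongr -(_ * ?_) + _ * ?_ + _ * ?_
  · exact rpow_le_rpow_of_nonpos huy hu (by linarith)
  · exact rpow_le_rpow_of_nonpos hrx hr (by linarith)
  · exact rpow_le_rpow_of_nonpos hrx hr (by linarith)

theorem tildeBS_mem_Ioo (hB : 0 < B) (hlamS : 0 < lamS) (hNm : 0 < N_m) (hNf : 0 < N_f) :
    tildeBS α B lamS N_m N_f ∈ Ioo 0 B := by
  have hL : 0 < N_m * lamS ^ (1 - 1 / α) := by positivity
  unfold tildeBS
  constructor
  · positivity
  · rw [div_lt_iff₀ (by positivity)]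
    nlinarith

theorem revenueDeriv_tildeBS (hα0 : 0 < α) (hκ : 0 < κ) (hR0 : 0 < R_0) (hlamS : 0 < lamS)
    (hNm : 0 < N_m) (hNf : 0 < N_f) (hB : 0 < B) {β : ℝ} (hβ : -1 < β)
    (hC : C_U = β * (κ * lamS * tildeBS α B lamS N_m N_f * R_0)) :
    revenueDeriv α κ B R_0 lamS N_m N_f C_U (tildeBS α B lamS N_m N_f)
      = lamS * R_0 * (lamS * tildeBS α B lamS N_m N_f * R_0 / N_f) ^ (-α) * (1 + β) ^ (-α - 1)
        * ((1 - α) - thresholdGap α β) := by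
  set T := tildeBS α B lamS N_m N_f with hT
  set r₀ := lamS * T * R_0 / N_f
  have hr₀ : 0 < r₀ := by have := (tildeBS_mem_Ioo (α := α) hB hlamS hNm hNf).1; positivity
  have h1β : 0 < 1 + β := by linarith
  have hu : macroRate B R_0 N_m T = lamS ^ (-(1 / α)) * r₀ := by
    have hL : lamS ^ (1 - 1 / α) = lamS * lamS ^ (-(1 / α)) := by
      rw [sub_eq_add_neg, rpow_add hlamS, rpow_one]
    simp only [macroRate, r₀, hT, tildeBS, hL]
    field_simp
    ring
  have hu' : macroRate B R_0 N_m T ^ (-α) = lamS * r₀ ^ (-α) := by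
    rw [hu, mul_rpow (by positivity) hr₀.le, ← rpow_mul hlamS.le, neg_mul_neg,
      one_div_mul_cancel hα0.ne', rpow_one]
  have hr : smallCellRate κ R_0 lamS N_f C_U T = r₀ * (1 + β) := by
    simp only [smallCellRate, r₀, hC]; field_simp
  have hC' : C_U / (κ * N_f) = β * r₀ := by
    simp only [r₀, hC]; field_simp
  have e1 : (1 + β) ^ (-α) = (1 + β) ^ (-α - 1) * (1 + β) := by
    rw [← rpow_add_one h1β.ne', sub_add_cancel]
  have e2 : r₀ ^ (-α - 1) * r₀ = r₀ ^ (-α) := by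
    rw [← rpow_add_one hr₀.ne', sub_add_cancel]
  have e3 : (1 + β) ^ (-α - 1) * (1 + β) ^ (1 + α) = 1 := by
    rw [← rpow_add h1β, show -α - 1 + (1 + α) = 0 by ring, rpow_zero]
  unfold revenueDeriv thresholdGap
  rw [hu', hC', hr, mul_rpow hr₀.le h1β.le, mul_rpow hr₀.le h1β.le, e1]
  linear_combination (α * lamS * R_0 * β * (1 + β) ^ (-α - 1)) * e2
    + (lamS * R_0 * r₀ ^ (-α) * (1 - α)) * e3

theorem IsMaxOn.compare_of_revenueDeriv {m c : ℝ} (hα0 : 0 < α) (hα1 : α < 1) (hκ : 0 < κ)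
    (hR0 : 0 < R_0) (hlamS : 0 < lamS) (hNm : 0 < N_m) (hNf : 0 < N_f) (hCU : 0 < C_U)
    (hmax : IsMaxOn (revenue α κ B R_0 lamS N_m N_f C_U) (Icc 0 B) m) (hm : m ∈ Icc 0 B)
    (hc : c ∈ Ioo 0 B) :
    (0 < revenueDeriv α κ B R_0 lamS N_m N_f C_U c → c < m) ∧
      (revenueDeriv α κ B R_0 lamS N_m N_f C_U c < 0 → m < c) := by
  have hderiv : ∀ x ∈ Ioo 0 B, HasDerivAt (revenue α κ B R_0 lamS N_m N_f C_U)
      (revenueDeriv α κ B R_0 lamS N_m N_f C_U x) x := fun x hx => by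
    have := hx.1
    have := sub_pos.2 hx.2
    exact hasDerivAt_revenue hκ.ne' hNm.ne' hNf.ne' (by unfold macroRate; positivity)
      (by unfold smallCellRate; positivity)
  have hcont := continuousOn_revenue (B := B) (N_m := N_m) hα1 hκ hR0 hlamS hNf hCU
  have hanti := antitoneOn_revenueDeriv (B := B) hα0 hα1 hκ hR0 hlamS hNm hNf hCU.le
  exact ⟨hmax.lt_of_hasDerivAt_pos hcont hderiv hanti hm hc,
    hmax.lt_of_hasDerivAt_neg hcont hderiv hanti hm hc⟩

end Revenue

theorem stmt10_general (α κ B R_0 lamS N_m N_f C_U βs Brev : ℝ)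
    (hα0 : 0 < α) (hα1 : α < 1) (hκ : κ = α ^ (1 / (1 - α)))
    (hB : 0 < B) (hR0 : 0 < R_0) (hlamS : 0 < lamS) (hNm : 0 < N_m) (hNf : 0 < N_f)
    (hβs : 0 < βs) (hroot : (1 - α) * (1 + βs) ^ (1 + α) - βs = 1 - α)
    (hmem : Brev ∈ Icc (0 : ℝ) B)
    (hmax : IsMaxOn (fun b : ℝ =>
        N_m * ((B - b) * R_0 / N_m) ^ (1 - α)
          + N_f * ((κ * lamS * b * R_0 + C_U) / (κ * N_f)) ^ (1 - α)
          - (C_U / κ) * ((κ * lamS * b * R_0 + C_U) / (κ * N_f)) ^ (-α)) (Icc 0 B) Brev) :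
    (0 < C_U →
      C_U < βs * κ * lamS * (N_f * B / (N_f + N_m * lamS ^ (1 - 1 / α))) * R_0 →
      N_f * B / (N_f + N_m * lamS ^ (1 - 1 / α)) < Brev) ∧
    (βs * κ * lamS * (N_f * B / (N_f + N_m * lamS ^ (1 - 1 / α))) * R_0 < C_U →
      Brev < N_f * B / (N_f + N_m * lamS ^ (1 - 1 / α))) := by
  have hκ : 0 < κ := hκ ▸ rpow_pos_of_pos hα0 _
  have hmax : IsMaxOn (revenue α κ B R_0 lamS N_m N_f C_U) (Icc 0 B) Brev := hmax
  have hT := tildeBS_mem_Ioo (α := α) hB hlamS hNm hNf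
  set T := tildeBS α B lamS N_m N_f
  have hscale : 0 < κ * lamS * T * R_0 := by have := hT.1; positivity
  set β := C_U / (κ * lamS * T * R_0)
  have hC : C_U = β * (κ * lamS * T * R_0) := (div_mul_cancel₀ _ hscale.ne').symm
  constructor
  · intro hCU (hlt : C_U < βs * κ * lamS * T * R_0)
    have hβ : β ∈ Ioo 0 βs := ⟨div_pos hCU hscale, (div_lt_iff₀ hscale).2 (by linarith)⟩
    have hgap := thresholdGap_lt_of_mem_Ioo hα0 hα1 hroot hβ
    have hpos : 0 < revenueDeriv α κ B R_0 lamS N_m N_f C_U T := by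
      rw [revenueDeriv_tildeBS hα0 hκ hR0 hlamS hNm hNf hB (by linarith [hβ.1]) hC]
      have := hT.1
      exact mul_pos (by positivity) (by linarith)
    exact (hmax.compare_of_revenueDeriv hα0 hα1 hκ hR0 hlamS hNm hNf hCU hmem hT).1 hpos
  · intro (hlt : βs * κ * lamS * T * R_0 < C_U)
    have hCU : 0 < C_U := (by have := hT.1; positivity : 0 < βs * κ * lamS * T * R_0).trans hlt
    have hβ : βs < β := (lt_div_iff₀ hscale).2 (by linarith)
    have hgap := lt_thresholdGap_of_lt hα0 hα1 hβs hroot hβ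
    have hneg : revenueDeriv α κ B R_0 lamS N_m N_f C_U T < 0 := by
      rw [revenueDeriv_tildeBS hα0 hκ hR0 hlamS hNm hNf hB (by linarith) hC]
      have := hT.1
      exact mul_neg_of_pos_of_neg (by positivity) (by linarith)
    exact (hmax.compare_of_revenueDeriv hα0 hα1 hκ hR0 hlamS hNm hNf hCU hmem hT).2 hneg

/-- with `C_U^th = β*·κ·λ_S·B̃_S·R_0` (where `β*` is the unique positive
root of `(1−α)(1+β)^(1+α) − β = 1−α` and `B̃_S = N_f·B/(N_f + N_m·λ_S^(1−1/α))`),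
the revenue-optimal small-cell bandwidth satisfies:
(i) if `0 < C_U < C_U^th` then `B_S^rev > B̃_S`;
(ii) if `C_U > C_U^th` then `B_S^rev < B̃_S`. -/
theorem stmt10 (α κ B R_0 lamS N_m N_f C_U βs Brev : ℝ)
    (hα0 : 0 < α) (hα1 : α < 1) (hκ : κ = α ^ (1 / (1 - α)))
    (hB : 0 < B) (hR0 : 0 < R_0) (hlamS : 0 < lamS) (hNm : 0 < N_m) (hNf : 0 < N_f)
    (hCU : 0 ≤ C_U)
    (hβs : 0 < βs) (hroot : (1 - α) * (1 + βs) ^ (1 + α) - βs = 1 - α)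
    (hβuniq : ∀ β : ℝ, 0 < β → (1 - α) * (1 + β) ^ (1 + α) - β = 1 - α → β = βs)
    (hmem : Brev ∈ Icc (0 : ℝ) B)
    (hmax : IsMaxOn (fun b : ℝ =>
        N_m * ((B - b) * R_0 / N_m) ^ (1 - α)
          + N_f * ((κ * lamS * b * R_0 + C_U) / (κ * N_f)) ^ (1 - α)
          - (C_U / κ) * ((κ * lamS * b * R_0 + C_U) / (κ * N_f)) ^ (-α)) (Icc 0 B) Brev) :
    (0 < C_U →
      C_U < βs * κ * lamS * (N_f * B / (N_f + N_m * lamS ^ (1 - 1 / α))) * R_0 →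
      N_f * B / (N_f + N_m * lamS ^ (1 - 1 / α)) < Brev) ∧
    (βs * κ * lamS * (N_f * B / (N_f + N_m * lamS ^ (1 - 1 / α))) * R_0 < C_U →
      Brev < N_f * B / (N_f + N_m * lamS ^ (1 - 1 / α))) :=
  stmt10_general α κ B R_0 lamS N_m N_f C_U βs Brev hα0 hα1 hκ hB hR0 hlamS hNm hNf hβs hroot hmem
    hmax
end

section
/- Let α ∈ (0,1) and B, R_0, N_m, N_f > 0 and λ_S > λ_U > 0. The function F(B_M, B_S, B_U) = N_m·u(B_M·R_0/N_m) + N_f·u((λ_S·B_S + λ_U·B_U)·R_0/N_f), maximized over B_M, B_S, B_U ≥ 0 with B_M + B_S + B_U = B, has the unique maximizer B_U = 0, B_M = N_m·B/(N_m + μ_S·N_f), B_S = μ_S·N_f·B/(N_m + μ_S·N_f), where μ_S = λ_S^{1/α − 1}. -/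
/-!
Since `λ_S > λ_U`, moving unlicensed bandwidth to the small cells strictly raises the welfare,
so `B_U = 0` at any maximizer. With `B_U = 0` and `p = 1 - α`, the identity
`(λ_S μ_S) ^ p = μ_S` turns the welfare into a positive multiple of
`N_m (B_M / N_m) ^ p + b (B_S / b) ^ p` with `b = μ_S N_f`. By strict concavity of `t ↦ t ^ p`
this is at most `(N_m + b) (B / (N_m + b)) ^ p`, with equality exactly when
`B_M / N_m = B_S / b`, which is the claimed allocation.
-/

open Real

theorem mul_div_rpow_add_mul_div_rpow_lt {p a b x y : ℝ} (hp0 : 0 < p) (hp1 : p < 1)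
    (ha : 0 < a) (hb : 0 < b) (hx : 0 ≤ x) (hy : 0 ≤ y) (hne : x / a ≠ y / b) :
    a * (x / a) ^ p + b * (y / b) ^ p < (a + b) * ((x + y) / (a + b)) ^ p := by
  have hab : 0 < a + b := add_pos ha hb
  have hconc := (strictConcaveOn_rpow hp0 hp1).2 (Set.mem_Ici.2 (div_nonneg hx ha.le))
    (Set.mem_Ici.2 (div_nonneg hy hb.le)) hne (div_pos ha hab) (div_pos hb hab)
    (by field_simp)
  have hmean : a / (a + b) * (x / a) + b / (a + b) * (y / b) = (x + y) / (a + b) := by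
    field_simp
  simp only [smul_eq_mul, hmean] at hconc
  calc a * (x / a) ^ p + b * (y / b) ^ p
      = (a + b) * (a / (a + b) * (x / a) ^ p + b / (a + b) * (y / b) ^ p) := by field_simp
    _ < (a + b) * ((x + y) / (a + b)) ^ p := mul_lt_mul_of_pos_left hconc hab

theorem mul_rpow_one_div_sub_one_rpow_one_sub {l α : ℝ} (hl : 0 < l) (hα : α ≠ 0) :
    (l * l ^ (1 / α - 1)) ^ (1 - α) = l ^ (1 / α - 1) := by
  rw [← rpow_one_add' hl.le (by simp [hα]), ← rpow_mul hl.le]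
  congr 1
  field_simp
  ring

noncomputable def welfare (α R_0 N_m N_f lamS lamU bM bS bU : ℝ) : ℝ :=
  N_m * ((bM * R_0 / N_m) ^ (1 - α) / (1 - α))
    + N_f * (((lamS * bS + lamU * bU) * R_0 / N_f) ^ (1 - α) / (1 - α))

section Welfare

variable {α B R_0 N_m N_f lamS lamU : ℝ}

theorem welfare_lt_welfare_move_unlicensed {bM bS bU : ℝ} (hα1 : α < 1) (hR0 : 0 < R_0)
    (hNf : 0 < N_f) (hlamU : 0 < lamU) (hlam : lamU < lamS) (hbS : 0 ≤ bS) (hbU : 0 < bU) :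
    welfare α R_0 N_m N_f lamS lamU bM bS bU < welfare α R_0 N_m N_f lamS lamU bM (bS + bU) 0 := by
  have hrate : lamS * bS + lamU * bU < lamS * (bS + bU) + lamU * 0 := by nlinarith
  unfold welfare
  gcongr _ + N_f * ((?_ * R_0 / N_f) ^ (1 - α) / (1 - α))
  have := hlamU.trans hlam
  positivity

theorem welfare_no_unlicensed {x y : ℝ} (hα0 : 0 < α) (hR0 : 0 < R_0) (hNm : 0 < N_m)
    (hNf : 0 < N_f) (hlamS : 0 < lamS) (hx : 0 ≤ x) (hy : 0 ≤ y) :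
    welfare α R_0 N_m N_f lamS lamU x y 0 = R_0 ^ (1 - α) / (1 - α) *
      (N_m * (x / N_m) ^ (1 - α)
        + lamS ^ (1 / α - 1) * N_f * (y / (lamS ^ (1 / α - 1) * N_f)) ^ (1 - α)) := by
  set μ := lamS ^ (1 / α - 1) with hμ
  have hμpos : 0 < μ := rpow_pos_of_pos hlamS _
  have hmacro : x * R_0 / N_m = R_0 * (x / N_m) := by ring
  have hsmall : (lamS * y + lamU * 0) * R_0 / N_f = R_0 * ((lamS * μ) * (y / (μ * N_f))) := by
    field_simp
    ring
  rw [welfare, hmacro, hsmall, mul_rpow hR0.le (by positivity),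
    mul_rpow hR0.le (by positivity), mul_rpow (by positivity) (by positivity),
    hμ, mul_rpow_one_div_sub_one_rpow_one_sub hlamS hα0.ne', ← hμ]
  ring

theorem welfare_no_unlicensed_lt_optimum {x y : ℝ} (hα0 : 0 < α) (hα1 : α < 1)
    (hR0 : 0 < R_0) (hNm : 0 < N_m) (hNf : 0 < N_f) (hlamS : 0 < lamS)
    (hx : 0 ≤ x) (hy : 0 ≤ y) (hsum : x + y = B)
    (hne : x ≠ N_m * B / (N_m + lamS ^ (1 / α - 1) * N_f)) :
    welfare α R_0 N_m N_f lamS lamU x y 0 < welfare α R_0 N_m N_f lamS lamU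
      (N_m * B / (N_m + lamS ^ (1 / α - 1) * N_f))
      (lamS ^ (1 / α - 1) * N_f * B / (N_m + lamS ^ (1 / α - 1) * N_f)) 0 := by
  set b := lamS ^ (1 / α - 1) * N_f
  have hb : 0 < b := mul_pos (rpow_pos_of_pos hlamS _) hNf
  have hD : 0 < N_m + b := add_pos hNm hb
  have hB : 0 ≤ B := hsum ▸ add_nonneg hx hy
  have hmacro : N_m * B / (N_m + b) / N_m = B / (N_m + b) := by field_simp
  have hsmall : b * B / (N_m + b) / b = B / (N_m + b) := by field_simp
  have hratio : x / N_m ≠ y / b := by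
    refine fun h => hne ?_
    rw [div_eq_div_iff hNm.ne' hb.ne'] at h
    rw [eq_div_iff hD.ne', ← hsum]
    linear_combination h
  rw [welfare_no_unlicensed hα0 hR0 hNm hNf hlamS hx hy,
    welfare_no_unlicensed hα0 hR0 hNm hNf hlamS (by positivity) (by positivity),
    hmacro, hsmall, ← add_mul]
  gcongr ?_ * ?_
  rw [← hsum]
  exact mul_div_rpow_add_mul_div_rpow_lt (sub_pos.2 hα1) (by linarith) hNm hb hx hy hratio

theorem welfare_lt_optimum {bM bS bU : ℝ} (hα0 : 0 < α) (hα1 : α < 1)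
    (hR0 : 0 < R_0) (hNm : 0 < N_m) (hNf : 0 < N_f) (hlamU : 0 < lamU) (hlam : lamU < lamS)
    (hbM : 0 ≤ bM) (hbS : 0 ≤ bS) (hbU : 0 ≤ bU) (hsum : bM + bS + bU = B)
    (hne : ¬(bM = N_m * B / (N_m + lamS ^ (1 / α - 1) * N_f) ∧
      bS = lamS ^ (1 / α - 1) * N_f * B / (N_m + lamS ^ (1 / α - 1) * N_f) ∧ bU = 0)) :
    welfare α R_0 N_m N_f lamS lamU bM bS bU < welfare α R_0 N_m N_f lamS lamU
      (N_m * B / (N_m + lamS ^ (1 / α - 1) * N_f))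
      (lamS ^ (1 / α - 1) * N_f * B / (N_m + lamS ^ (1 / α - 1) * N_f)) 0 := by
  have hlamS : 0 < lamS := hlamU.trans hlam
  set μ := lamS ^ (1 / α - 1)
  have hμ : 0 < μ := rpow_pos_of_pos hlamS _
  have hopt : N_m * B / (N_m + μ * N_f) + μ * N_f * B / (N_m + μ * N_f) = B := by
    field_simp
  rcases hbU.eq_or_lt with rfl | hbU
  · rw [add_zero] at hsum
    refine welfare_no_unlicensed_lt_optimum hα0 hα1 hR0 hNm hNf hlamS hbM hbS hsum
      fun hM => hne ⟨hM, ?_, rfl⟩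
    linarith
  · calc welfare α R_0 N_m N_f lamS lamU bM bS bU
        < welfare α R_0 N_m N_f lamS lamU bM (bS + bU) 0 :=
          welfare_lt_welfare_move_unlicensed hα1 hR0 hNf hlamU hlam hbS hbU
      _ ≤ _ := by
        by_cases hM : bM = N_m * B / (N_m + μ * N_f)
        · rw [hM, show bS + bU = μ * N_f * B / (N_m + μ * N_f) by linarith]
        · exact (welfare_no_unlicensed_lt_optimum hα0 hα1 hR0 hNm hNf hlamS hbM
            (add_nonneg hbS hbU.le) (by linarith) hM).le

end Welfare

/-- when `λ_S > λ_U`, the social-planner welfare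
`F(B_M, B_S, B_U) = N_m·u(B_M·R_0/N_m) + N_f·u((λ_S·B_S + λ_U·B_U)·R_0/N_f)`,
maximized over nonnegative allocations summing to `B`, has the unique maximizer
`B_U = 0`, `B_M = N_m·B/(N_m + μ_S·N_f)`, `B_S = μ_S·N_f·B/(N_m + μ_S·N_f)`
with `μ_S = λ_S^(1/α − 1)`. -/
theorem stmt17 (α B R_0 N_m N_f lamS lamU : ℝ)
    (hα0 : 0 < α) (hα1 : α < 1)
    (hB : 0 < B) (hR0 : 0 < R_0) (hNm : 0 < N_m) (hNf : 0 < N_f)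
    (hlamU : 0 < lamU) (hlam : lamU < lamS) :
    ∀ bM bS bU : ℝ,
      (0 ≤ bM ∧ 0 ≤ bS ∧ 0 ≤ bU ∧ bM + bS + bU = B ∧
        ∀ cM cS cU : ℝ, 0 ≤ cM → 0 ≤ cS → 0 ≤ cU → cM + cS + cU = B →
          N_m * ((cM * R_0 / N_m) ^ (1 - α) / (1 - α))
              + N_f * (((lamS * cS + lamU * cU) * R_0 / N_f) ^ (1 - α) / (1 - α))
            ≤ N_m * ((bM * R_0 / N_m) ^ (1 - α) / (1 - α))
              + N_f * (((lamS * bS + lamU * bU) * R_0 / N_f) ^ (1 - α) / (1 - α)))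
      ↔ (bM = N_m * B / (N_m + lamS ^ (1 / α - 1) * N_f) ∧
         bS = lamS ^ (1 / α - 1) * N_f * B / (N_m + lamS ^ (1 / α - 1) * N_f) ∧
         bU = 0) := by
  have hlamS : 0 < lamS := hlamU.trans hlam
  set μ := lamS ^ (1 / α - 1)
  have hμ : 0 < μ := rpow_pos_of_pos hlamS _
  have hopt : N_m * B / (N_m + μ * N_f) + μ * N_f * B / (N_m + μ * N_f) + 0 = B := by
    rw [add_zero]
    field_simp
  have hoptM : 0 ≤ N_m * B / (N_m + μ * N_f) := by positivity
  have hoptS : 0 ≤ μ * N_f * B / (N_m + μ * N_f) := by positivity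
  intro bM bS bU
  constructor
  · rintro ⟨hbM, hbS, hbU, hsum, hmax⟩
    by_contra hne
    exact (hmax _ _ _ hoptM hoptS le_rfl hopt).not_gt
      (welfare_lt_optimum hα0 hα1 hR0 hNm hNf hlamU hlam hbM hbS hbU hsum hne)
  · rintro ⟨rfl, rfl, rfl⟩
    refine ⟨hoptM, hoptS, le_rfl, hopt, fun cM cS cU hcM hcS hcU hcsum => ?_⟩
    by_cases hc : cM = N_m * B / (N_m + μ * N_f) ∧ cS = μ * N_f * B / (N_m + μ * N_f) ∧ cU = 0
    · obtain ⟨rfl, rfl, rfl⟩ := hc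
      exact le_rfl
    · exact (welfare_lt_optimum hα0 hα1 hR0 hNm hNf hlamU hlam hcM hcS hcU hcsum hc).le
end
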